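/- Let M and R be real 2×2 matrices with M11 = M12 = M21 > M22 and R22 = R12 = R21 > R11. Let D be the digraph on the eight distinct vertices x, x', x2, x3, y, y', y2, y3 with arcs xx2, xx3, x'x2, x'x3, y2y3 each carrying cost 1 and matrix M, and arcs yy2, yy3, y'y2, y'y3, x2x3 each carrying cost 1 and matrix R. Then the maximum of w^P(D) over all partitions P of V(D) equals 5·M11 + 5·R22, this maximum is attained by the partition X1 = {x, x', y2, y3}, X2 = {y, y', x2, x3}, and every weight-maximizing partition P = (X1, X2) satisfies x, x' ∈ X1 and y, y' ∈ X2. -/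
import Mathlib


/-- The weight `w^P(uv)` of an arc from `u` to `v` carrying cost `1` and matrix `M`,
under the partition `P = (X1, V \ X1)`. -/
def arcW {V : Type*} [DecidableEq V] (X1 : Finset V)
    (M : Matrix (Fin 2) (Fin 2) ℝ) (u v : V) : ℝ :=
  if u ∈ X1 then (if v ∈ X1 then M 0 0 else M 0 1)
  else (if v ∈ X1 then M 1 0 else M 1 1)

/-- The total weight of the Case 2 gadget digraph of Theorem 5, with the arcs
`xx2, xx3, x'x2, x'x3, y2y3` carrying matrix `M` and `yy2, yy3, y'y2, y'y3, x2x3`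
carrying matrix `R`, all costs `1`. -/
def gadgetWeight {V : Type*} [DecidableEq V]
    (x x' x2 x3 y y' y2 y3 : V) (M R : Matrix (Fin 2) (Fin 2) ℝ)
    (X1 : Finset V) : ℝ :=
  arcW X1 M x x2 + arcW X1 M x x3 + arcW X1 M x' x2 + arcW X1 M x' x3 +
  arcW X1 M y2 y3 +
  arcW X1 R y y2 + arcW X1 R y y3 + arcW X1 R y' y2 + arcW X1 R y' y3 +
  arcW X1 R x2 x3

lemma arcW_le_M {V : Type*} [DecidableEq V] (X1 : Finset V)
    (M : Matrix (Fin 2) (Fin 2) ℝ)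
    (hM1 : M 0 0 = M 0 1) (hM2 : M 0 0 = M 1 0) (hM3 : M 1 1 < M 0 0)
    (u v : V) : arcW X1 M u v ≤ M 0 0 := by
  unfold arcW; split_ifs <;> linarith

lemma arcW_le_R {V : Type*} [DecidableEq V] (X1 : Finset V)
    (R : Matrix (Fin 2) (Fin 2) ℝ)
    (hR1 : R 1 1 = R 0 1) (hR2 : R 1 1 = R 1 0) (hR3 : R 0 0 < R 1 1)
    (u v : V) : arcW X1 R u v ≤ R 1 1 := by
  unfold arcW; split_ifs <;> linarith

lemma arcW_M_mem {V : Type*} [DecidableEq V] (X1 : Finset V)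
    (M : Matrix (Fin 2) (Fin 2) ℝ) (hM3 : M 1 1 < M 0 0)
    (u v : V) (h : arcW X1 M u v = M 0 0) : u ∈ X1 ∨ v ∈ X1 := by
  by_contra hc
  push_neg at hc
  simp only [arcW, if_neg hc.1, if_neg hc.2] at h
  linarith

lemma arcW_R_mem {V : Type*} [DecidableEq V] (X1 : Finset V)
    (R : Matrix (Fin 2) (Fin 2) ℝ) (hR3 : R 0 0 < R 1 1)
    (u v : V) (h : arcW X1 R u v = R 1 1) : u ∉ X1 ∨ v ∉ X1 := by
  by_contra hc
  push_neg at hc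
  simp only [arcW, if_pos hc.1, if_pos hc.2] at h
  linarith

/-- Case 2 of Theorem 5: if `M11 = M12 = M21 > M22` and `R22 = R12 = R21 > R11`, then in
the gadget digraph the maximum partition weight is `5·M11 + 5·R22`, attained at
`X1 = {x, x', y2, y3}`, and every optimal partition has `x, x' ∈ X1` and `y, y' ∈ X2`. -/
theorem gadget_case2 {V : Type*} [Fintype V] [DecidableEq V]
    (x x' x2 x3 y y' y2 y3 : V)
    (hnodup : ([x, x', x2, x3, y, y', y2, y3] : List V).Nodup)
    (huniv : (Finset.univ : Finset V) = {x, x', x2, x3, y, y', y2, y3})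
    (M R : Matrix (Fin 2) (Fin 2) ℝ)
    (hM1 : M 0 0 = M 0 1) (hM2 : M 0 0 = M 1 0) (hM3 : M 1 1 < M 0 0)
    (hR1 : R 1 1 = R 0 1) (hR2 : R 1 1 = R 1 0) (hR3 : R 0 0 < R 1 1) :
    gadgetWeight x x' x2 x3 y y' y2 y3 M R ({x, x', y2, y3} : Finset V)
        = 5 * M 0 0 + 5 * R 1 1 ∧
    (∀ X1 : Finset V,
        gadgetWeight x x' x2 x3 y y' y2 y3 M R X1 ≤ 5 * M 0 0 + 5 * R 1 1) ∧
    (∀ X1 : Finset V,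
        gadgetWeight x x' x2 x3 y y' y2 y3 M R X1 = 5 * M 0 0 + 5 * R 1 1 →
        x ∈ X1 ∧ x' ∈ X1 ∧ y ∉ X1 ∧ y' ∉ X1) := by
  simp only [List.nodup_cons, List.mem_cons, List.not_mem_nil, or_false,
    List.nodup_nil, and_true] at hnodup
  obtain ⟨hx, hx', hx2, hx3, hy, hy', hy2, -⟩ := hnodup
  push_neg at hx hx' hx2 hx3 hy hy' hy2
  have hbound : ∀ X1 : Finset V,
      gadgetWeight x x' x2 x3 y y' y2 y3 M R X1 ≤ 5 * M 0 0 + 5 * R 1 1 := by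
    intro X1
    have h1 := arcW_le_M X1 M hM1 hM2 hM3 x x2
    have h2 := arcW_le_M X1 M hM1 hM2 hM3 x x3
    have h3 := arcW_le_M X1 M hM1 hM2 hM3 x' x2
    have h4 := arcW_le_M X1 M hM1 hM2 hM3 x' x3
    have h5 := arcW_le_M X1 M hM1 hM2 hM3 y2 y3
    have h6 := arcW_le_R X1 R hR1 hR2 hR3 y y2
    have h7 := arcW_le_R X1 R hR1 hR2 hR3 y y3
    have h8 := arcW_le_R X1 R hR1 hR2 hR3 y' y2
    have h9 := arcW_le_R X1 R hR1 hR2 hR3 y' y3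
    have h10 := arcW_le_R X1 R hR1 hR2 hR3 x2 x3
    unfold gadgetWeight
    linarith
  refine ⟨?_, hbound, ?_⟩
  · have hxm : x ∈ ({x, x', y2, y3} : Finset V) := by simp
    have hx'm : x' ∈ ({x, x', y2, y3} : Finset V) := by simp
    have hy2m : y2 ∈ ({x, x', y2, y3} : Finset V) := by simp
    have hy3m : y3 ∈ ({x, x', y2, y3} : Finset V) := by simp
    have hx2m : x2 ∉ ({x, x', y2, y3} : Finset V) := by
      simp only [Finset.mem_insert, Finset.mem_singleton, not_or]
      exact ⟨hx.2.1.symm, hx'.1.symm, hx2.2.2.2.1, hx2.2.2.2.2⟩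
    have hx3m : x3 ∉ ({x, x', y2, y3} : Finset V) := by
      simp only [Finset.mem_insert, Finset.mem_singleton, not_or]
      exact ⟨hx.2.2.1.symm, hx'.2.1.symm, hx3.2.2.1, hx3.2.2.2⟩
    have hym : y ∉ ({x, x', y2, y3} : Finset V) := by
      simp only [Finset.mem_insert, Finset.mem_singleton, not_or]
      exact ⟨hx.2.2.2.1.symm, hx'.2.2.1.symm, hy.2.1, hy.2.2⟩
    have hy'm : y' ∉ ({x, x', y2, y3} : Finset V) := by
      simp only [Finset.mem_insert, Finset.mem_singleton, not_or]
      exact ⟨hx.2.2.2.2.1.symm, hx'.2.2.2.1.symm, hy'.1, hy'.2⟩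
    simp only [gadgetWeight, arcW, if_pos hxm, if_pos hx'm, if_pos hy2m,
      if_pos hy3m, if_neg hx2m, if_neg hx3m, if_neg hym, if_neg hy'm]
    linarith
  · intro X1 heq
    have h1 := arcW_le_M X1 M hM1 hM2 hM3 x x2
    have h2 := arcW_le_M X1 M hM1 hM2 hM3 x x3
    have h3 := arcW_le_M X1 M hM1 hM2 hM3 x' x2
    have h4 := arcW_le_M X1 M hM1 hM2 hM3 x' x3
    have h5 := arcW_le_M X1 M hM1 hM2 hM3 y2 y3
    have h6 := arcW_le_R X1 R hR1 hR2 hR3 y y2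
    have h7 := arcW_le_R X1 R hR1 hR2 hR3 y y3
    have h8 := arcW_le_R X1 R hR1 hR2 hR3 y' y2
    have h9 := arcW_le_R X1 R hR1 hR2 hR3 y' y3
    have h10 := arcW_le_R X1 R hR1 hR2 hR3 x2 x3
    unfold gadgetWeight at heq
    have e1 : arcW X1 M x x2 = M 0 0 := by linarith
    have e2 : arcW X1 M x x3 = M 0 0 := by linarith
    have e3 : arcW X1 M x' x2 = M 0 0 := by linarith
    have e4 : arcW X1 M x' x3 = M 0 0 := by linarith
    have e5 : arcW X1 M y2 y3 = M 0 0 := by linarith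
    have e6 : arcW X1 R y y2 = R 1 1 := by linarith
    have e7 : arcW X1 R y y3 = R 1 1 := by linarith
    have e8 : arcW X1 R y' y2 = R 1 1 := by linarith
    have e9 : arcW X1 R y' y3 = R 1 1 := by linarith
    have e10 : arcW X1 R x2 x3 = R 1 1 := by linarith
    have m1 := arcW_M_mem X1 M hM3 x x2 e1
    have m2 := arcW_M_mem X1 M hM3 x x3 e2
    have m3 := arcW_M_mem X1 M hM3 x' x2 e3
    have m4 := arcW_M_mem X1 M hM3 x' x3 e4
    have m5 := arcW_M_mem X1 M hM3 y2 y3 e5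
    have m6 := arcW_R_mem X1 R hR3 y y2 e6
    have m7 := arcW_R_mem X1 R hR3 y y3 e7
    have m8 := arcW_R_mem X1 R hR3 y' y2 e8
    have m9 := arcW_R_mem X1 R hR3 y' y3 e9
    have m10 := arcW_R_mem X1 R hR3 x2 x3 e10
    have gx : x ∈ X1 := by
      by_contra hxn
      have h2in : x2 ∈ X1 := m1.resolve_left hxn
      have h3in : x3 ∈ X1 := m2.resolve_left hxn
      exact m10.elim (fun h => h h2in) (fun h => h h3in)
    have gx' : x' ∈ X1 := by
      by_contra hxn
      have h2in : x2 ∈ X1 := m3.resolve_left hxn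
      have h3in : x3 ∈ X1 := m4.resolve_left hxn
      exact m10.elim (fun h => h h2in) (fun h => h h3in)
    have gy : y ∉ X1 := by
      intro hyn
      have h2o : y2 ∉ X1 := m6.resolve_left (not_not_intro hyn)
      have h3o : y3 ∉ X1 := m7.resolve_left (not_not_intro hyn)
      exact m5.elim h2o h3o
    have gy' : y' ∉ X1 := by
      intro hyn
      have h2o : y2 ∉ X1 := m8.resolve_left (not_not_intro hyn)
      have h3o : y3 ∉ X1 := m9.resolve_left (not_not_intro hyn)
      exact m5.elim h2o h3o
    exact ⟨gx, gx', gy, gy'⟩
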